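/- arXiv:2102.02410 — 2 statements merged into one kernel-verified Lean document; each statement's English description precedes it below -/
import Mathlib

section
/- There exist d, r, m ≥ 1, nonzero teacher neurons w_1*, …, w_r* ∈ ℝ^d and student neurons w_1, …, w_m ∈ ℝ^d such that E_{x ~ N(0, I_d)}[(Σ_{j=1}^m ‖w_j‖·ReLU(⟨w_j, x⟩) − Σ_{i=1}^r ReLU(⟨w_i*, x⟩))²] = 0, yet some nonzero student neuron w_j is not a positive scalar multiple of any teacher neuron w_i*. (For example, one may take any teacher with Σ_{i=1}^r w_i* = 0 and students satisfying ‖w_j‖ w_j = −w_j* for j ∈ [r].) -/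
/-!
Since `ReLU` is positively homogeneous and `ReLU(-t) - ReLU(t) = -t`, a student with
`‖wⱼ‖ wⱼ = -wⱼ*` computes `f*(x) - ⟨∑ᵢ wᵢ*, x⟩`, which is the teacher network `f*` as soon as the
teacher neurons sum to zero. For the teachers `(1,0), (0,1), (-1,-1)` in `ℝ²`, the student neuron
attached to `(1,0)` points along `(-1,0)`, and no teacher neuron is a positive multiple of it.
-/

open MeasureTheory ProbabilityTheory Finset
open scoped Classical

noncomputable section

/-- Standard Gaussian measure `N(0, I_d)` on `ℝ^d`. -/
def stdG (d : ℕ) : Measure (Fin d → ℝ) := Measure.pi fun _ => gaussianReal 0 1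

instance (d : ℕ) : IsProbabilityMeasure (stdG d) := by
  unfold stdG; infer_instance

/-- Euclidean inner product on `ℝ^d`. -/
def dotp {d : ℕ} (w x : Fin d → ℝ) : ℝ := ∑ i, w i * x i

/-- Euclidean norm on `ℝ^d`. -/
def nrm {d : ℕ} (w : Fin d → ℝ) : ℝ := Real.sqrt (dotp w w)

/-- The angle (up to sign) between two vectors:
`∠(w,v) = arccos(|⟨w,v⟩| / (‖w‖‖v‖)) ∈ [0, π/2]`. -/
def ang {d : ℕ} (w v : Fin d → ℝ) : ℝ := Real.arccos (|dotp w v| / (nrm w * nrm v))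

/-- The teacher network `f*(x) = ∑ᵢ |⟨wᵢ*, x⟩|`. -/
def fStar {d r : ℕ} (ws : Fin r → Fin d → ℝ) (x : Fin d → ℝ) : ℝ := ∑ i, |dotp (ws i) x|

/-- The student network `f_W(x) = ∑ⱼ ‖wⱼ‖ |⟨wⱼ, x⟩|`. -/
def fStu {d m : ℕ} (W : Fin m → Fin d → ℝ) (x : Fin d → ℝ) : ℝ :=
  ∑ j, nrm (W j) * |dotp (W j) x|

/-- The population square loss `L(W) = (1/2) E_x[(f_W(x) - f*(x))²]`. -/
def loss {d r m : ℕ} (ws : Fin r → Fin d → ℝ) (W : Fin m → Fin d → ℝ) : ℝ :=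
  (1 / 2) * ∫ x, (fStu W x - fStar ws x) ^ 2 ∂(stdG d)

/-- The gradient `∇_{w_j} L(W) = E_x[R(x) ‖w_j‖ (I + w̄_j w̄_jᵀ) x · sgn(⟨w_j, x⟩)]`
(defined to be `0` when `w_j = 0`). -/
def gradL {d r m : ℕ} (ws : Fin r → Fin d → ℝ) (W : Fin m → Fin d → ℝ) (j : Fin m) :
    Fin d → ℝ :=
  if W j = 0 then 0 else fun k =>
    ∫ x, (fStu W x - fStar ws x) * nrm (W j) *
      (x k + (W j k / nrm (W j)) * (dotp (W j) x / nrm (W j))) * Real.sign (dotp (W j) x)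
      ∂(stdG d)

/-- ReLU activation. -/
def relu (t : ℝ) : ℝ := max t 0

lemma relu_mul_of_nonneg {c : ℝ} (hc : 0 ≤ c) (t : ℝ) : c * relu t = relu (c * t) := by
  rw [relu, relu, mul_max_of_nonneg _ _ hc, mul_zero]

lemma relu_neg_sub_relu (t : ℝ) : relu (-t) - relu t = -t := by
  rcases le_total t 0 with h | h <;> simp [relu, h]

section Vectors

variable {d : ℕ}

lemma dotp_smul_left (c : ℝ) (w x : Fin d → ℝ) : dotp (c • w) x = c * dotp w x := by
  simp only [dotp, Pi.smul_apply, smul_eq_mul, mul_sum, mul_assoc]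

lemma dotp_neg_left (w x : Fin d → ℝ) : dotp (-w) x = -dotp w x := by
  simp only [dotp, Pi.neg_apply, neg_mul, sum_neg_distrib]

lemma sum_dotp_left {ι : Type*} (s : Finset ι) (w : ι → Fin d → ℝ) (x : Fin d → ℝ) :
    ∑ i ∈ s, dotp (w i) x = dotp (∑ i ∈ s, w i) x := by
  simp only [dotp, Finset.sum_apply, sum_mul]
  exact sum_comm

lemma nrm_eq_norm (w : Fin d → ℝ) : nrm w = ‖WithLp.toLp 2 w‖ := by
  simp [nrm, dotp, EuclideanSpace.norm_eq, sq]

lemma nrm_nonneg (w : Fin d → ℝ) : 0 ≤ nrm w := Real.sqrt_nonneg _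

lemma nrm_smul (c : ℝ) (w : Fin d → ℝ) : nrm (c • w) = |c| * nrm w := by
  rw [nrm_eq_norm, nrm_eq_norm, WithLp.toLp_smul, norm_smul, Real.norm_eq_abs]

lemma nrm_pos {w : Fin d → ℝ} : 0 < nrm w ↔ w ≠ 0 := by
  rw [nrm_eq_norm, norm_pos_iff, Ne, WithLp.toLp_eq_zero]

lemma exists_nrm_smul_self_eq (w : Fin d → ℝ) : ∃ v : Fin d → ℝ, nrm v • v = w := by
  rcases eq_or_ne w 0 with rfl | hw
  · exact ⟨0, smul_zero _⟩
  have hpos : 0 < √(nrm w) := Real.sqrt_pos.2 (nrm_pos.2 hw)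
  refine ⟨(√(nrm w))⁻¹ • w, ?_⟩
  rw [nrm_smul, abs_inv, abs_of_pos hpos, smul_smul]
  convert one_smul ℝ w
  field_simp
  exact (Real.sq_sqrt (nrm_nonneg w)).symm

end Vectors

theorem student_eq_teacher_of_sum_eq_zero {d r : ℕ} {ws W : Fin r → Fin d → ℝ}
    (hsum : ∑ i, ws i = 0) (hW : ∀ i, nrm (W i) • W i = -ws i) (x : Fin d → ℝ) :
    ∑ j, nrm (W j) * relu (dotp (W j) x) = ∑ i, relu (dotp (ws i) x) := by
  have hneuron : ∀ j, nrm (W j) * relu (dotp (W j) x) = relu (-dotp (ws j) x) := fun j => by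
    rw [relu_mul_of_nonneg (nrm_nonneg _), ← dotp_smul_left, hW, dotp_neg_left]
  rw [← sub_eq_zero, sum_congr rfl fun j _ => hneuron j, ← sum_sub_distrib]
  simp only [relu_neg_sub_relu, sum_neg_distrib, sum_dotp_left, hsum]
  simp [dotp]

/-- with ReLU activation, zero loss does not imply student-teacher matching:
there is an instance with zero population loss where some nonzero student neuron is not a
positive multiple of any teacher neuron. -/
theorem relu_zero_loss_no_matching :
    ∃ (d r m : ℕ), 1 ≤ d ∧ 1 ≤ r ∧ 1 ≤ m ∧
    ∃ (ws : Fin r → Fin d → ℝ) (W : Fin m → Fin d → ℝ),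
      (∀ i, ws i ≠ 0) ∧
      (∫ x, (∑ j, nrm (W j) * relu (dotp (W j) x) - ∑ i, relu (dotp (ws i) x)) ^ 2
          ∂(stdG d)) = 0 ∧
      ∃ j : Fin m, W j ≠ 0 ∧ ∀ (i : Fin r) (c : ℝ), 0 < c → W j ≠ c • ws i := by
  set ws : Fin 3 → Fin 2 → ℝ := ![![1, 0], ![0, 1], ![-1, -1]] with hws
  have hsum : ∑ i, ws i = 0 := by
    ext k; fin_cases k <;> simp [hws, Fin.sum_univ_three]
  choose W hW using fun i => exists_nrm_smul_self_eq (-ws i)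
  refine ⟨2, 3, 3, by norm_num, by norm_num, by norm_num, ws, W, ?_, ?_, 0, ?_, ?_⟩
  · intro i h
    fin_cases i <;> simp [hws, funext_iff, Fin.forall_fin_two] at h
  · simp [student_eq_teacher_of_sum_eq_zero hsum hW]
  · intro h
    simpa [h, hws] using congrFun (hW 0) 0
  · intro i c hc h
    have hmul : (nrm (W 0) * c) • ws i = -ws 0 := by rw [← smul_smul, ← h, hW]
    have hk : 0 ≤ nrm (W 0) * c := mul_nonneg (nrm_nonneg _) hc.le
    generalize nrm (W 0) * c = k at hmul hk
    have h0 := congrFun hmul 0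
    have h1 := congrFun hmul 1
    fin_cases i <;> simp [hws] at h0 h1 <;> linarith
end
end

section
/- Let w* ∈ ℝ² be a unit vector, u ∈ ℝ² a unit vector orthogonal to w*, and for δ ∈ (0, π/2) set ρ = (2 cos δ)^{-1/2}, w_1 = ρ(cos δ · w* + sin δ · u) and w_2 = ρ(cos δ · w* − sin δ · u) (so ‖w_1‖ w_1 + ‖w_2‖ w_2 = w*, ∠(w_1, w*) = ∠(w_2, w*) = δ). Then there exist absolute constants c_1, c_2, δ_0 > 0 such that for all 0 < δ ≤ δ_0, the loss L(W) for the student (w_1, w_2) against the single teacher neuron w* satisfies c_1 δ³ ≤ L(W) ≤ c_2 δ³. -/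
/-!
With `t = tan δ`, the identity `|a + b| + |a - b| = 2 max |a| |b|` turns the student into
`max (|⟨w*, x⟩|) (t |⟨u, x⟩|)`, so the residual is `(t |⟨u, x⟩| - |⟨w*, x⟩|)₊`. Since the Gaussian
is rotation invariant, the loss is `E[(t |q| - |p|)₊²] / 2` for independent standard normals `p`, `q`.
For fixed `q`, the expectation over `p` is of order `(t |q|)³`, because the density of `p` is
bounded above everywhere and below near `0`. Hence the loss is of order `t³`, and `δ ≤ tan δ ≤ 2δ`.
-/

open MeasureTheory ProbabilityTheory Finset
open scoped Classical

noncomputable section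

open Set

lemma dotp_eq_inner {d : ℕ} (w x : Fin d → ℝ) :
    dotp w x = inner ℝ (WithLp.toLp 2 w : EuclideanSpace ℝ (Fin d)) (WithLp.toLp 2 x) := by
  simp [dotp, EuclideanSpace.inner_eq_star_dotProduct, dotProduct, mul_comm]

lemma measurePreserving_toLp_stdG (d : ℕ) :
    MeasurePreserving (WithLp.toLp 2) (stdG d) (stdGaussian (EuclideanSpace ℝ (Fin d))) :=
  ⟨by fun_prop, map_pi_eq_stdGaussian⟩

theorem measurePreserving_stdG_dotp {d : ℕ} (v : Fin d → Fin d → ℝ)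
    (hv : ∀ i j, dotp (v i) (v j) = if i = j then 1 else 0) :
    MeasurePreserving (fun x i => dotp (v i) x) (stdG d) (stdG d) := by
  have hon : Orthonormal ℝ fun i => (WithLp.toLp 2 (v i) : EuclideanSpace ℝ (Fin d)) := by
    rw [orthonormal_iff_ite]; intro i j; rw [← dotp_eq_inner, hv]
  let b := OrthonormalBasis.mk hon
    (hon.linearIndependent.span_eq_top_of_card_eq_finrank' (by simp)).ge
  have hrepr : (fun x i => dotp (v i) x) = WithLp.ofLp ∘ b.repr ∘ WithLp.toLp 2 := by
    ext x i
    simp [b, dotp_eq_inner, OrthonormalBasis.repr_apply_apply, OrthonormalBasis.coe_mk]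
  have hto := measurePreserving_toLp_stdG d
  rw [hrepr]
  have hb : MeasurePreserving b.repr (stdGaussian _) (stdGaussian _) :=
    ⟨b.repr.continuous.measurable, stdGaussian_map b.repr⟩
  exact (hto.symm (MeasurableEquiv.toLp 2 _)).comp (hb.comp hto)

lemma gaussianPDFReal_le_of_abs_sub_le {μ : ℝ} {v : NNReal} {x y : ℝ} (h : |x - μ| ≤ |y - μ|) :
    gaussianPDFReal μ v y ≤ gaussianPDFReal μ v x := by
  have hsq : (x - μ) ^ 2 ≤ (y - μ) ^ 2 := sq_le_sq.mpr h
  simp only [gaussianPDFReal_def]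
  gcongr

lemma measureReal_gaussianReal (μ : ℝ) {v : NNReal} (hv : v ≠ 0) (s : Set ℝ) :
    (gaussianReal μ v).real s = ∫ x in s, gaussianPDFReal μ v x := by
  rw [measureReal_def, gaussianReal_apply_eq_integral μ hv,
    ENNReal.toReal_ofReal (setIntegral_nonneg_of_ae (ae_of_all _ (gaussianPDFReal_nonneg μ v)))]

lemma measureReal_gaussianReal_Icc_le (μ : ℝ) {v : NNReal} (hv : v ≠ 0) {a b : ℝ} (hab : a ≤ b) :
    (gaussianReal μ v).real (Icc a b) ≤ (b - a) * gaussianPDFReal μ v μ := by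
  rw [measureReal_gaussianReal μ hv]
  calc ∫ x in Icc a b, gaussianPDFReal μ v x ≤ ∫ _ in Icc a b, gaussianPDFReal μ v μ :=
        setIntegral_mono_on (integrable_gaussianPDFReal μ v).integrableOn (by simp)
          measurableSet_Icc fun x _ => gaussianPDFReal_le_of_abs_sub_le (by simp)
    _ = (b - a) * gaussianPDFReal μ v μ := by simp [hab]

lemma le_measureReal_gaussianReal_Icc (μ : ℝ) {v : NNReal} (hv : v ≠ 0) {a b R : ℝ} (hab : a ≤ b)
    (hR : Icc a b ⊆ Icc (μ - R) (μ + R)) :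
    (b - a) * gaussianPDFReal μ v (μ + R) ≤ (gaussianReal μ v).real (Icc a b) := by
  rw [measureReal_gaussianReal μ hv]
  have hle : ∀ x ∈ Icc a b, gaussianPDFReal μ v (μ + R) ≤ gaussianPDFReal μ v x := by
    intro x hx
    obtain ⟨h₁, h₂⟩ := hR hx
    apply gaussianPDFReal_le_of_abs_sub_le
    rw [add_sub_cancel_left, abs_sub_le_iff]
    constructor <;> linarith [abs_nonneg R, le_abs_self R]
  simpa [hab, mul_comm] using setIntegral_ge_of_const_le_real measurableSet_Icc (by simp) hle
    (integrable_gaussianPDFReal μ v).integrableOn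

lemma integrable_abs_pow_gaussianReal (μ : ℝ) (v : NNReal) (n : ℕ) :
    Integrable (fun x : ℝ => |x| ^ n) (gaussianReal μ v) := by
  simpa using (memLp_id_gaussianReal (μ := μ) (v := v) n).integrable_norm_pow'

lemma integral_abs_pow_gaussianReal_pos (μ : ℝ) {v : NNReal} (hv : v ≠ 0) (n : ℕ) :
    0 < ∫ x, |x| ^ n ∂gaussianReal μ v := by
  have := nullSingletonClass_gaussianReal (μ := μ) hv
  rw [integral_pos_iff_support_of_nonneg (fun x => by positivity)
    (integrable_abs_pow_gaussianReal μ v n)]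
  have hsupp : {0}ᶜ ⊆ Function.support (fun x : ℝ => |x| ^ n) := fun x hx => by
    simpa using pow_ne_zero n (abs_ne_zero.mpr hx)
  refine lt_of_lt_of_le ?_ (measure_mono hsupp)
  rw [measure_compl (measurableSet_singleton 0) (measure_ne_top _ _), measure_singleton]
  simp

/-- The integrand lives on the double wedge `|p| < t |q|` of half-angle `arctan t` about the
`q`-axis. -/
def wedgeMoment (t : ℝ) : ℝ :=
  ∫ z : ℝ × ℝ, (max 0 (t * |z.2| - |z.1|)) ^ 2 ∂(gaussianReal 0 1).prod (gaussianReal 0 1)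

lemma integral_max_zero_sub_abs_sq_le {a : ℝ} (ha : 0 ≤ a) :
    ∫ p, (max 0 (a - |p|)) ^ 2 ∂gaussianReal 0 1 ≤ 2 * gaussianPDFReal 0 1 0 * a ^ 3 := by
  have hle : ∀ p, (max 0 (a - |p|)) ^ 2 ≤ (Icc (-a) a).indicator (fun _ => a ^ 2) p := by
    intro p
    by_cases hp : p ∈ Icc (-a) a
    · rw [indicator_of_mem hp]
      exact pow_le_pow_left₀ (le_max_left _ _) (max_le ha (by linarith [abs_nonneg p])) 2
    · have : a < |p| := by
        rw [Set.mem_Icc, ← abs_le] at hp; exact not_le.mp hp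
      simp [indicator_of_notMem hp, this.le]
  calc ∫ p, (max 0 (a - |p|)) ^ 2 ∂gaussianReal 0 1
      ≤ ∫ p, (Icc (-a) a).indicator (fun _ => a ^ 2) p ∂gaussianReal 0 1 :=
        integral_mono_of_nonneg (ae_of_all _ fun p => sq_nonneg _)
          ((integrable_const _).indicator measurableSet_Icc) (ae_of_all _ hle)
    _ = (gaussianReal 0 1).real (Icc (-a) a) * a ^ 2 := by
        rw [integral_indicator_const _ measurableSet_Icc, smul_eq_mul]
    _ ≤ (a - -a) * gaussianPDFReal 0 1 0 * a ^ 2 := by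
        gcongr
        exact measureReal_gaussianReal_Icc_le 0 one_ne_zero (by linarith)
    _ = 2 * gaussianPDFReal 0 1 0 * a ^ 3 := by ring

lemma integrable_max_zero_sub_abs_sq (t : ℝ) :
    Integrable (fun z : ℝ × ℝ => (max 0 (t * |z.2| - |z.1|)) ^ 2)
      ((gaussianReal 0 1).prod (gaussianReal 0 1)) := by
  have hsq : Integrable (fun z : ℝ × ℝ => t ^ 2 * z.2 ^ 2)
      ((gaussianReal 0 1).prod (gaussianReal 0 1)) :=
    (((memLp_id_gaussianReal 2).integrable_sq).comp_snd _).const_mul _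
  refine hsq.mono' (by fun_prop) (ae_of_all _ fun z => ?_)
  have hlin : t * |z.2| ≤ |t| * |z.2| := mul_le_mul_of_nonneg_right (le_abs_self t) (abs_nonneg _)
  rw [Real.norm_of_nonneg (sq_nonneg _), ← sq_abs t, ← sq_abs z.2, ← mul_pow]
  exact pow_le_pow_left₀ (le_max_left _ _)
    (max_le (by positivity) (by linarith [abs_nonneg z.1])) 2

lemma wedgeMoment_le {t : ℝ} (ht : 0 ≤ t) :
    wedgeMoment t ≤ 2 * gaussianPDFReal 0 1 0 * (∫ q, |q| ^ 3 ∂gaussianReal 0 1) * t ^ 3 := by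
  rw [wedgeMoment, integral_prod_symm _ (integrable_max_zero_sub_abs_sq t)]
  calc ∫ q, ∫ p, (max 0 (t * |q| - |p|)) ^ 2 ∂gaussianReal 0 1 ∂gaussianReal 0 1
      ≤ ∫ q, 2 * gaussianPDFReal 0 1 0 * t ^ 3 * |q| ^ 3 ∂gaussianReal 0 1 := by
        refine integral_mono_of_nonneg (ae_of_all _ fun q => integral_nonneg fun p => sq_nonneg _)
          ((integrable_abs_pow_gaussianReal 0 1 3).const_mul _) (ae_of_all _ fun q => ?_)
        calc _ ≤ 2 * gaussianPDFReal 0 1 0 * (t * |q|) ^ 3 :=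
              integral_max_zero_sub_abs_sq_le (by positivity)
          _ = _ := by ring
    _ = _ := by rw [integral_const_mul]; ring

lemma le_wedgeMoment {t : ℝ} (ht : 0 ≤ t) (ht4 : t ≤ 4) :
    gaussianPDFReal 0 1 1 ^ 2 / 64 * t ^ 3 ≤ wedgeMoment t := by
  set A := Icc (-(t / 4)) (t / 4)
  set B := Icc (1 / 2 : ℝ) 1
  have hle : ∀ z : ℝ × ℝ, (A ×ˢ B).indicator (fun _ => (t / 4) ^ 2) z
      ≤ (max 0 (t * |z.2| - |z.1|)) ^ 2 := by
    intro z
    by_cases hz : z ∈ A ×ˢ B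
    · obtain ⟨hp, hq⟩ := hz
      rw [indicator_of_mem (mk_mem_prod hp hq)]
      have hp' : |z.1| ≤ t / 4 := abs_le.mpr hp
      have hq' : 1 / 2 ≤ |z.2| := hq.1.trans (le_abs_self _)
      have : t / 4 ≤ t * |z.2| - |z.1| := by nlinarith
      exact pow_le_pow_left₀ (by positivity) (this.trans (le_max_right _ _)) 2
    · rw [indicator_of_notMem hz]; positivity
  have hA : t / 2 * gaussianPDFReal 0 1 1 ≤ (gaussianReal 0 1).real A := by
    have := le_measureReal_gaussianReal_Icc 0 one_ne_zero (R := 1) (by linarith : -(t / 4) ≤ t / 4)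
      (Icc_subset_Icc (by linarith) (by linarith))
    rw [zero_add] at this; linarith
  have hB : 1 / 2 * gaussianPDFReal 0 1 1 ≤ (gaussianReal 0 1).real B := by
    have := le_measureReal_gaussianReal_Icc 0 one_ne_zero (R := 1) (by norm_num : (1 / 2 : ℝ) ≤ 1)
      (Icc_subset_Icc (by norm_num) (by norm_num))
    rw [zero_add] at this; linarith
  have hpdf := gaussianPDFReal_pos 0 1 1 one_ne_zero
  calc gaussianPDFReal 0 1 1 ^ 2 / 64 * t ^ 3
      = t / 2 * gaussianPDFReal 0 1 1 * (1 / 2 * gaussianPDFReal 0 1 1) * (t / 4) ^ 2 := by ring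
    _ ≤ (gaussianReal 0 1).real A * (gaussianReal 0 1).real B * (t / 4) ^ 2 := by gcongr
    _ = ∫ z, (A ×ˢ B).indicator (fun _ => (t / 4) ^ 2) z
          ∂(gaussianReal 0 1).prod (gaussianReal 0 1) := by
        rw [integral_indicator_const _ (measurableSet_Icc.prod measurableSet_Icc),
          measureReal_prod_prod, smul_eq_mul]
    _ ≤ wedgeMoment t :=
        integral_mono ((integrable_const _).indicator (measurableSet_Icc.prod measurableSet_Icc))
          (integrable_max_zero_sub_abs_sq t) hle

lemma abs_add_add_abs_sub (a b : ℝ) : |a + b| + |a - b| = 2 * max |a| |b| := by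
  grind [abs_cases]

lemma dotp_comm {d : ℕ} (w x : Fin d → ℝ) : dotp w x = dotp x w := by
  simp only [dotp, mul_comm]

lemma dotp_combination_add {d : ℕ} (ρ c s : ℝ) (w u x : Fin d → ℝ) :
    dotp (fun k => ρ * (c * w k + s * u k)) x = ρ * (c * dotp w x + s * dotp u x) := by
  simp only [dotp, Finset.mul_sum, ← Finset.sum_add_distrib]
  exact Finset.sum_congr rfl fun k _ => by ring

lemma dotp_combination_sub {d : ℕ} (ρ c s : ℝ) (w u x : Fin d → ℝ) :
    dotp (fun k => ρ * (c * w k - s * u k)) x = ρ * (c * dotp w x - s * dotp u x) := by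
  simp only [dotp, Finset.mul_sum, ← Finset.sum_sub_distrib]
  exact Finset.sum_congr rfl fun k _ => by ring

section SymmetricPair

variable {d : ℕ} {w u : Fin d → ℝ} {c s ρ : ℝ}

lemma nrm_combination_add (hw : dotp w w = 1) (hu : dotp u u = 1) (hwu : dotp w u = 0)
    (hcs : c ^ 2 + s ^ 2 = 1) (hρ : 0 ≤ ρ) : nrm (fun k => ρ * (c * w k + s * u k)) = ρ := by
  rw [nrm, dotp_combination_add, dotp_comm w, dotp_comm u, dotp_combination_add,
    dotp_combination_add, dotp_comm u w, hw, hu, hwu]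
  rw [show ρ * (c * (ρ * (c * 1 + s * 0)) + s * (ρ * (c * 0 + s * 1))) = ρ ^ 2 by
    linear_combination ρ ^ 2 * hcs, Real.sqrt_sq hρ]

lemma nrm_combination_sub (hw : dotp w w = 1) (hu : dotp u u = 1) (hwu : dotp w u = 0)
    (hcs : c ^ 2 + s ^ 2 = 1) (hρ : 0 ≤ ρ) : nrm (fun k => ρ * (c * w k - s * u k)) = ρ := by
  rw [nrm, dotp_combination_sub, dotp_comm w, dotp_comm u, dotp_combination_sub,
    dotp_combination_sub, dotp_comm u w, hw, hu, hwu]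
  rw [show ρ * (c * (ρ * (c * 1 - s * 0)) - s * (ρ * (c * 0 - s * 1))) = ρ ^ 2 by
    linear_combination ρ ^ 2 * hcs, Real.sqrt_sq hρ]

lemma fStu_sub_fStar_eq (hw : dotp w w = 1) (hu : dotp u u = 1) (hwu : dotp w u = 0)
    (hc : 0 < c) (hs : 0 ≤ s) (hcs : c ^ 2 + s ^ 2 = 1) (hρ : 0 ≤ ρ) (hρc : ρ ^ 2 = (2 * c)⁻¹)
    (x : Fin d → ℝ) :
    fStu ![fun k => ρ * (c * w k + s * u k), fun k => ρ * (c * w k - s * u k)] x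
      - fStar (fun _ : Fin 1 => w) x = max 0 (s / c * |dotp u x| - |dotp w x|) := by
  simp only [fStu, fStar, Fin.sum_univ_two, Fin.sum_univ_one, Matrix.cons_val_zero,
    Matrix.cons_val_one, nrm_combination_add hw hu hwu hcs hρ, nrm_combination_sub hw hu hwu hcs hρ,
    dotp_combination_add, dotp_combination_sub, abs_mul, abs_of_nonneg hρ]
  set A := dotp w x
  set B := dotp u x
  calc ρ * (ρ * |c * A + s * B|) + ρ * (ρ * |c * A - s * B|) - |A|
      = (2 * c)⁻¹ * (|c * A + s * B| + |c * A - s * B|) - |A| := by rw [← hρc]; ring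
    _ = c⁻¹ * max (c * |A|) (s * |B|) - |A| := by
        rw [abs_add_add_abs_sub, abs_mul, abs_mul, abs_of_pos hc, abs_of_nonneg hs]; ring
    _ = max |A| (s / c * |B|) - |A| := by
        rw [mul_max_of_nonneg _ _ (inv_nonneg.mpr hc.le), inv_mul_cancel_left₀ hc.ne']
        congr 2; ring
    _ = max 0 (s / c * |B| - |A|) := by rw [← max_sub_sub_right, sub_self]

end SymmetricPair

lemma measurePreserving_dotp_pair {w u : Fin 2 → ℝ} (hw : dotp w w = 1) (hu : dotp u u = 1)
    (hwu : dotp w u = 0) :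
    MeasurePreserving (fun x => (dotp w x, dotp u x)) (stdG 2)
      ((gaussianReal 0 1).prod (gaussianReal 0 1)) := by
  have hv : ∀ i j, dotp (![w, u] i) (![w, u] j) = if i = j then 1 else 0 := by
    intro i j
    fin_cases i <;> fin_cases j <;> simp [hw, hu, hwu, dotp_comm u w]
  exact (measurePreserving_finTwoArrow _).comp (measurePreserving_stdG_dotp _ hv)

lemma loss_eq_wedgeMoment {w u : Fin 2 → ℝ} {c s ρ : ℝ} (hw : dotp w w = 1) (hu : dotp u u = 1)
    (hwu : dotp w u = 0) (hc : 0 < c) (hs : 0 ≤ s) (hcs : c ^ 2 + s ^ 2 = 1) (hρ : 0 ≤ ρ)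
    (hρc : ρ ^ 2 = (2 * c)⁻¹) :
    loss (fun _ : Fin 1 => w)
        ![fun k => ρ * (c * w k + s * u k), fun k => ρ * (c * w k - s * u k)]
      = wedgeMoment (s / c) / 2 := by
  have hp := measurePreserving_dotp_pair hw hu hwu
  simp only [loss, fStu_sub_fStar_eq hw hu hwu hc hs hcs hρ hρc]
  rw [wedgeMoment, ← hp.map_eq, integral_map hp.measurable.aemeasurable (by fun_prop)]
  ring

lemma tan_le_two_mul {x : ℝ} (hx₀ : 0 ≤ x) (hx₁ : x ≤ 1) : Real.tan x ≤ 2 * x := by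
  have hcos : 1 / 2 ≤ Real.cos x := by nlinarith [Real.one_sub_sq_div_two_le_cos (x := x)]
  rw [Real.tan_eq_sin_div_cos, div_le_iff₀ (by linarith)]
  nlinarith [Real.sin_le hx₀]

lemma rpow_neg_half_sq {a : ℝ} (ha : 0 ≤ a) : (a ^ (-(1 : ℝ) / 2)) ^ 2 = a⁻¹ := by
  rw [← Real.rpow_natCast, ← Real.rpow_mul ha]
  norm_num [Real.rpow_neg_one]

/-- warm-up example with one teacher neuron and two student neurons placed
symmetrically at angle δ so that `‖w₁‖w₁ + ‖w₂‖w₂ = w*`: the loss is `Θ(δ³)`. -/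
theorem warmup_loss_theta_delta_cubed :
    ∃ c₁ c₂ δ₀ : ℝ, 0 < c₁ ∧ 0 < c₂ ∧ 0 < δ₀ ∧
    ∀ (wstar u : Fin 2 → ℝ), nrm wstar = 1 → nrm u = 1 → dotp wstar u = 0 →
    ∀ δ : ℝ, 0 < δ → δ < Real.pi / 2 → δ ≤ δ₀ →
    ∀ ρ : ℝ, ρ = (2 * Real.cos δ) ^ (-(1 : ℝ) / 2) →
    ∀ w₁ w₂ : Fin 2 → ℝ,
      w₁ = (fun k => ρ * (Real.cos δ * wstar k + Real.sin δ * u k)) →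
      w₂ = (fun k => ρ * (Real.cos δ * wstar k - Real.sin δ * u k)) →
      c₁ * δ ^ 3 ≤ loss (fun _ : Fin 1 => wstar) ![w₁, w₂] ∧
      loss (fun _ : Fin 1 => wstar) ![w₁, w₂] ≤ c₂ * δ ^ 3 := by
  have hpdf₀ := gaussianPDFReal_pos 0 1 0 one_ne_zero
  have hpdf₁ := gaussianPDFReal_pos 0 1 1 one_ne_zero
  have hM := integral_abs_pow_gaussianReal_pos 0 one_ne_zero 3
  refine ⟨gaussianPDFReal 0 1 1 ^ 2 / 128,
    8 * gaussianPDFReal 0 1 0 * ∫ q, |q| ^ 3 ∂gaussianReal 0 1, 1, by positivity, by positivity,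
    one_pos, ?_⟩
  rintro w u hw hu hwu δ hδ₀ hδπ hδ₁ ρ rfl _ _ rfl rfl
  have hcos : 0 < Real.cos δ := Real.cos_pos_of_mem_Ioo ⟨by linarith, hδπ⟩
  have hsin : 0 ≤ Real.sin δ := Real.sin_nonneg_of_nonneg_of_le_pi hδ₀.le (by linarith)
  rw [loss_eq_wedgeMoment (Real.sqrt_eq_one.mp hw) (Real.sqrt_eq_one.mp hu) hwu hcos hsin
    (by rw [add_comm, Real.sin_sq_add_cos_sq]) (by positivity) (rpow_neg_half_sq (by positivity)),
    ← Real.tan_eq_sin_div_cos]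
  have htan₀ : δ ≤ Real.tan δ := (Real.lt_tan hδ₀ hδπ).le
  have htan₁ : Real.tan δ ≤ 2 * δ := tan_le_two_mul hδ₀.le hδ₁
  constructor
  · calc gaussianPDFReal 0 1 1 ^ 2 / 128 * δ ^ 3
        = gaussianPDFReal 0 1 1 ^ 2 / 64 * δ ^ 3 / 2 := by ring
      _ ≤ gaussianPDFReal 0 1 1 ^ 2 / 64 * Real.tan δ ^ 3 / 2 := by gcongr
      _ ≤ _ := by gcongr; exact le_wedgeMoment (by linarith) (by linarith)
  · calc wedgeMoment (Real.tan δ) / 2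
        ≤ 2 * gaussianPDFReal 0 1 0 * (∫ q, |q| ^ 3 ∂gaussianReal 0 1) * Real.tan δ ^ 3 / 2 := by
          gcongr; exact wedgeMoment_le (by linarith)
      _ ≤ 2 * gaussianPDFReal 0 1 0 * (∫ q, |q| ^ 3 ∂gaussianReal 0 1) * (2 * δ) ^ 3 / 2 := by
          gcongr; linarith
      _ = _ := by ring
end
end
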